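/- For t in a neighborhood of 0 (|t| < 1/2), the function e^{x(1-\sqrt{1-2t})} equals its Taylor series \sum_{n=0}^{\infty} p_n(x) t^n/n!, where p_n(x) = \sum_{k=1}^{n} \frac{(2n-k-1)!}{2^{n-k}(k-1)!(n-k)!} x^k for n \ge 1 and p_0(x) = 1. -/

import Mathlib

open Finset Real

/-- The reverse Bessel polynomial `p n`. -/
noncomputable def pB (n : ℕ) (x : ℝ) : ℝ :=
  if n = 0 then 1 else
    ∑ k ∈ Finset.Icc 1 n,
      ((2 * n - k - 1).factorial : ℝ) / (2 ^ (n - k) * (k - 1).factorial * (n - k).factorial) * x ^ k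

/-!
Write `u = 1 - √(1 - 2t)`. The binomial series of `√(1 + z)` gives the coefficients of `u`, and
the relation `u² = 2u - 2t` shows that the coefficients of `u ^ k` satisfy a two-step recursion in
`k`, solved by `[tⁿ] u ^ k = k (2n - k - 1)! / (2^(n-k) (n - k)! n!)`. These coefficients are
nonnegative, so the double series `exp (x u) = ∑ₖ xᵏ/k! ∑ₙ [tⁿ] uᵏ tⁿ` converges absolutely for
`|t| < 1/2`, and summing it over `k` first for each fixed `n` gives `pB n x / n!`.
-/

open scoped Nat

lemma Ring.succ_nsmul_choose_succ {R : Type*} [NonAssocRing R] [Pow R ℕ] [NatPowAssoc R]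
    [BinomialRing R] (r : R) (n : ℕ) :
    (n + 1) • Ring.choose r (n + 1) = Ring.choose r n * (r - n) := by
  simpa [Nat.choose_succ_self_right, Ring.choose_one_right] using
    Ring.choose_smul_choose r (Nat.le_succ n)

lemma hasSum_sqrt_one_add {z : ℝ} (hz : |z| < 1) :
    HasSum (fun n => Ring.choose (1 / 2 : ℝ) n * z ^ n) (√(1 + z)) := by
  have h := Real.one_add_rpow_hasFPowerSeriesOnBall_zero (a := (1 / 2 : ℝ)) |>.hasSum
    (y := z) (by simpa [edist_dist, Real.dist_eq] using hz)
  rw [Real.sqrt_eq_rpow]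
  simpa [binomialSeries, FormalMultilinearSeries.ofScalars, mul_comm] using h

lemma hasSum_pow_div_factorial_mul_pow (y u : ℝ) :
    HasSum (fun k => y ^ k / k ! * u ^ k) (exp (y * u)) := by
  simpa [Real.exp_eq_exp_ℝ, mul_pow, div_mul_eq_mul_div] using
    NormedSpace.expSeries_div_hasSum_exp (y * u)

/-- The coefficient of `t ^ n` in `(1 - √(1 - 2 t)) ^ k`. -/
noncomputable def oneSubSqrtPowCoeff (k n : ℕ) : ℝ :=
  if n < k then 0 else if n = 0 then 1 else
    k * (2 * n - k - 1)! / (2 ^ (n - k) * (n - k)! * n !)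

lemma oneSubSqrtPowCoeff_of_lt {k n : ℕ} (h : n < k) : oneSubSqrtPowCoeff k n = 0 := by
  simp [oneSubSqrtPowCoeff, h]

lemma oneSubSqrtPowCoeff_zero_left (n : ℕ) : oneSubSqrtPowCoeff 0 n = if n = 0 then 1 else 0 := by
  simp [oneSubSqrtPowCoeff]

lemma oneSubSqrtPowCoeff_self (k : ℕ) : oneSubSqrtPowCoeff k k = 1 := by
  rcases k with _ | k
  · simp [oneSubSqrtPowCoeff]
  · rw [oneSubSqrtPowCoeff, if_neg (lt_irrefl _), if_neg k.succ_ne_zero,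
      show 2 * (k + 1) - (k + 1) - 1 = k by omega, Nat.sub_self, Nat.factorial_succ]
    push_cast
    field_simp
    ring

lemma oneSubSqrtPowCoeff_nonneg (k n : ℕ) : 0 ≤ oneSubSqrtPowCoeff k n := by
  unfold oneSubSqrtPowCoeff
  split_ifs <;> positivity

lemma oneSubSqrtPowCoeff_one_succ (n : ℕ) :
    oneSubSqrtPowCoeff 1 (n + 1) = -Ring.choose (1 / 2 : ℝ) (n + 1) * (-2) ^ (n + 1) := by
  induction n with
  | zero => simp [oneSubSqrtPowCoeff]
  | succ n ih =>
    have hcoeff : (n + 2 : ℝ) * oneSubSqrtPowCoeff 1 (n + 2) =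
        (2 * n + 1) * oneSubSqrtPowCoeff 1 (n + 1) := by
      simp only [oneSubSqrtPowCoeff, show ¬ n + 2 < 1 by omega, show ¬ n + 1 < 1 by omega,
        if_false, n.succ_ne_zero, (n + 1).succ_ne_zero,
        show 2 * (n + 2) - 1 - 1 = 2 * n + 1 + 1 by omega,
        show 2 * (n + 1) - 1 - 1 = 2 * n by omega, show n + 2 - 1 = n + 1 by omega,
        Nat.add_sub_cancel, Nat.factorial_succ]
      push_cast
      field_simp
      ring
    have hchoose : (n + 2 : ℝ) * Ring.choose (1 / 2 : ℝ) (n + 2) =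
        Ring.choose (1 / 2 : ℝ) (n + 1) * (1 / 2 - (n + 1)) := by
      simpa [nsmul_eq_mul, add_assoc, one_add_one_eq_two] using
        Ring.succ_nsmul_choose_succ (1 / 2 : ℝ) (n + 1)
    refine mul_left_cancel₀ (by positivity : (n + 2 : ℝ) ≠ 0) ?_
    rw [hcoeff, ih]
    linear_combination (-2) ^ (n + 2) * hchoose

lemma oneSubSqrtPowCoeff_add_two (k n : ℕ) :
    oneSubSqrtPowCoeff (k + 2) (n + 1) =
      2 * oneSubSqrtPowCoeff (k + 1) (n + 1) - 2 * oneSubSqrtPowCoeff k n := by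
  rcases lt_trichotomy n k with h | rfl | h
  · rw [oneSubSqrtPowCoeff_of_lt (by omega), oneSubSqrtPowCoeff_of_lt (by omega),
      oneSubSqrtPowCoeff_of_lt h]
    ring
  · simp [oneSubSqrtPowCoeff_of_lt, oneSubSqrtPowCoeff_self]
  · obtain ⟨p, rfl⟩ : ∃ p, n = k + p + 1 := ⟨n - k - 1, by omega⟩
    simp only [oneSubSqrtPowCoeff, show ¬ k + p + 1 + 1 < k + 2 by omega,
      show ¬ k + p + 1 + 1 < k + 1 by omega, show ¬ k + p + 1 < k by omega, if_false,
      Nat.succ_ne_zero, show 2 * (k + p + 1 + 1) - (k + 2) - 1 = 2 * p + k + 1 by omega,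
      show 2 * (k + p + 1 + 1) - (k + 1) - 1 = 2 * p + k + 1 + 1 by omega,
      show 2 * (k + p + 1) - k - 1 = 2 * p + k + 1 by omega,
      show k + p + 1 + 1 - (k + 2) = p by omega, show k + p + 1 + 1 - (k + 1) = p + 1 by omega,
      show k + p + 1 - k = p + 1 by omega, Nat.factorial_succ]
    push_cast
    field_simp
    ring

section

variable {t : ℝ}

lemma hasSum_oneSubSqrtPowCoeff_one (ht : |t| < 1 / 2) :
    HasSum (fun n => oneSubSqrtPowCoeff 1 n * t ^ n) (1 - √(1 - 2 * t)) := by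
  have hsqrt := hasSum_sqrt_one_add (z := -2 * t) (by rw [abs_mul]; norm_num; linarith)
  rw [← hasSum_nat_add_iff' 1] at hsqrt ⊢
  convert hsqrt.neg using 1
  · ext n
    rw [oneSubSqrtPowCoeff_one_succ, mul_pow]
    ring
  · simp [oneSubSqrtPowCoeff, sub_eq_add_neg]

lemma oneSubSqrt_sq (ht : t ≤ 1 / 2) :
    (1 - √(1 - 2 * t)) ^ 2 = 2 * (1 - √(1 - 2 * t)) - 2 * t := by
  have := Real.sq_sqrt (show 0 ≤ 1 - 2 * t by linarith)
  linear_combination this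

lemma hasSum_oneSubSqrtPowCoeff (ht : |t| < 1 / 2) (k : ℕ) :
    HasSum (fun n => oneSubSqrtPowCoeff k n * t ^ n) ((1 - √(1 - 2 * t)) ^ k) := by
  induction k using Nat.twoStepInduction with
  | zero =>
    rw [pow_zero]
    convert hasSum_ite_eq 0 (1 : ℝ) with n
    rw [oneSubSqrtPowCoeff_zero_left]
    split_ifs with hn <;> simp [hn]
  | one => rw [pow_one]; exact hasSum_oneSubSqrtPowCoeff_one ht
  | more k ih₀ ih₁ =>
    have hconst (j : ℕ) : oneSubSqrtPowCoeff (j + 1) 0 = 0 := oneSubSqrtPowCoeff_of_lt j.succ_pos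
    rw [← hasSum_nat_add_iff' 1] at ih₁ ⊢
    simp only [sum_range_one, hconst, zero_mul, sub_zero] at ih₁ ⊢
    convert (ih₁.mul_left 2).sub ((ih₀.mul_left t).mul_left 2) using 1
    · ext n
      rw [oneSubSqrtPowCoeff_add_two]
      ring
    · linear_combination (1 - √(1 - 2 * t)) ^ k * oneSubSqrt_sq ((le_abs_self t).trans ht.le)

end

lemma hasSum_prod_exp_mul_oneSubSqrt (x : ℝ) {t : ℝ} (ht : |t| < 1 / 2) :
    HasSum (fun p : ℕ × ℕ => x ^ p.1 / p.1 ! * (oneSubSqrtPowCoeff p.1 p.2 * t ^ p.2))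
      (exp (x * (1 - √(1 - 2 * t)))) := by
  have fiber (y : ℝ) {s : ℝ} (hs : |s| < 1 / 2) (k : ℕ) :
      HasSum (fun n => y ^ k / k ! * (oneSubSqrtPowCoeff k n * s ^ n))
        (y ^ k / k ! * (1 - √(1 - 2 * s)) ^ k) :=
    (hasSum_oneSubSqrtPowCoeff hs k).mul_left _
  have hsummable : Summable fun p : ℕ × ℕ =>
      x ^ p.1 / p.1 ! * (oneSubSqrtPowCoeff p.1 p.2 * t ^ p.2) := by
    -- the norms form the same double series at `|x|`, `|t|`, whose terms are nonnegative
    refine Summable.of_norm ?_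
    have habs : |(|t|)| < 1 / 2 := by rwa [abs_abs]
    simp only [norm_mul, norm_div, norm_pow, Real.norm_eq_abs, Nat.abs_cast,
      abs_of_nonneg (oneSubSqrtPowCoeff_nonneg _ _)]
    refine (summable_prod_of_nonneg fun _ =>
      mul_nonneg (by positivity) (mul_nonneg (oneSubSqrtPowCoeff_nonneg _ _) (by positivity))).mpr
      ⟨fun k => (fiber |x| habs k).summable, ?_⟩
    simp only [(fiber |x| habs _).tsum_eq]
    exact (hasSum_pow_div_factorial_mul_pow |x| _).summable
  have hsum := hsummable.hasSum
  rwa [(hsum.prod_fiberwise (fiber x ht)).unique (hasSum_pow_div_factorial_mul_pow x _)] at hsum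

lemma pB_div_factorial (n : ℕ) (x : ℝ) :
    pB n x / n ! = ∑ k ∈ range (n + 1), x ^ k / k ! * oneSubSqrtPowCoeff k n := by
  rcases n.eq_zero_or_pos with rfl | hn
  · simp [pB, oneSubSqrtPowCoeff]
  have hsub : Icc 1 n ⊆ range (n + 1) := fun k hk =>
    mem_range.mpr (Nat.lt_succ_of_le (mem_Icc.mp hk).2)
  rw [pB, if_neg hn.ne', sum_div, ← sum_subset hsub fun k hk hk' => ?_]
  · refine sum_congr rfl fun k hk => ?_
    obtain ⟨j, rfl⟩ : ∃ j, k = j + 1 := ⟨k - 1, by grind⟩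
    rw [oneSubSqrtPowCoeff, if_neg (by grind), if_neg hn.ne', Nat.add_sub_cancel,
      Nat.factorial_succ]
    push_cast
    field_simp
  · obtain rfl : k = 0 := by grind
    simp [oneSubSqrtPowCoeff_zero_left, hn.ne']

theorem reverse_bessel_generating_function (x t : ℝ) (ht : |t| < 1 / 2) :
    HasSum (fun n : ℕ => pB n x * t ^ n / n.factorial)
      (Real.exp (x * (1 - Real.sqrt (1 - 2 * t)))) := by
  have hswap := (Equiv.prodComm ℕ ℕ).hasSum_iff.mpr (hasSum_prod_exp_mul_oneSubSqrt x ht)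
  refine hswap.prod_fiberwise fun n => ?_
  have hfinite : ∀ k ∉ range (n + 1),
      x ^ k / k ! * (oneSubSqrtPowCoeff k n * t ^ n) = 0 := fun k hk => by
    rw [oneSubSqrtPowCoeff_of_lt (by simpa using hk), zero_mul, mul_zero]
  have hsum : ∑ k ∈ range (n + 1), x ^ k / k ! * (oneSubSqrtPowCoeff k n * t ^ n) =
      pB n x * t ^ n / n ! := by
    simp only [mul_div_right_comm, pB_div_factorial, sum_mul, mul_assoc]
  exact hsum ▸ hasSum_sum_of_ne_finset_zero hfinite
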